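/- arXiv:0912.3868 — 3 statements merged into one kernel-verified Lean document; each statement's English description precedes it below -/
import Mathlib

section
/- Let H = (V,E) be a k-uniform hypergraph, v ∈ V a vertex with degree d, and suppose the number of ordered pairs of distinct edges through v sharing at least 2 vertices is at most η·d². Let 0 < ε < 1 and let D be the number of edges e ∋ v entirely contained in the ε-percolation V_ε of V (including v itself being sampled). Then E[D²] ≤ (ε^{2k-1} + ε^{k+1} η) d² + ε^k d. -/
/-!
Writing `D = ∑_{e ∋ v} 𝟙[e ⊆ V_ε]` gives `E[D²] = ∑_{e, f ∋ v} ε ^ |e ∪ f|`, and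
`|e ∪ f| = 2k - |e ∩ f|`. The diagonal pairs contribute `ε^k d`; distinct edges meet in
`1 ≤ |e ∩ f| < k` vertices, so `ε ^ |e ∪ f|` is at most `ε^(k+1)` for the at most `η d²`
overlapping pairs and exactly `ε^(2k-1)` for the others.
-/

open MeasureTheory Finset

section Combinatorics

variable {α : Type*} [DecidableEq α] {k : ℕ}

lemma Finset.card_inter_lt_of_card_eq_of_ne {e f : Finset α} (he : #e = k) (hf : #f = k)
    (hne : e ≠ f) : #(e ∩ f) < k := by
  refine he ▸ card_lt_card (inter_subset_left.ssubset_of_ne fun h => hne ?_)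
  exact eq_of_subset_of_card_le (inter_eq_left.1 h) (hf.trans he.symm).le

lemma pow_card_union_le_of_not_disjoint {p : ℝ} (hp0 : 0 ≤ p) (hp1 : p ≤ 1) {e f : Finset α}
    (he : #e = k) (hf : #f = k) (hef : ¬Disjoint e f) :
    p ^ #(e ∪ f) ≤ p ^ (2 * k - 1) + (if e ≠ f ∧ 2 ≤ #(e ∩ f) then p ^ (k + 1) else 0)
      + (if e = f then p ^ k else 0) := by
  have hunion : #(e ∪ f) + #(e ∩ f) = 2 * k := by rw [card_union_add_card_inter, he, hf]; ring
  have hinter : 1 ≤ #(e ∩ f) := card_pos.2 (not_disjoint_iff_nonempty_inter.1 hef)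
  have := pow_nonneg hp0 (2 * k - 1)
  by_cases heq : e = f
  · subst heq
    simp only [union_self, he, ne_eq, not_true_eq_false, false_and, if_false, if_true]
    linarith
  by_cases hbig : 2 ≤ #(e ∩ f)
  · have hlt := card_inter_lt_of_card_eq_of_ne he hf heq
    simp only [heq, hbig, ne_eq, not_false_eq_true, and_self, if_true, if_false]
    have : p ^ #(e ∪ f) ≤ p ^ (k + 1) := pow_le_pow_of_le_one hp0 hp1 (by omega)
    linarith
  · simp only [heq, hbig, and_false, if_false, add_zero]
    exact pow_le_pow_of_le_one hp0 hp1 (by omega)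

lemma sum_pow_card_union_le_of_intersecting {p : ℝ} (hp0 : 0 ≤ p) (hp1 : p ≤ 1)
    {S : Finset (Finset α)} (hS : ∀ e ∈ S, #e = k) (hSi : (S : Set (Finset α)).Intersecting) :
    ∑ q ∈ S ×ˢ S, p ^ #(q.1 ∪ q.2) ≤ p ^ (2 * k - 1) * #S ^ 2
      + p ^ (k + 1) * #{q ∈ S ×ˢ S | q.1 ≠ q.2 ∧ 2 ≤ #(q.1 ∩ q.2)} + p ^ k * #S := by
  calc ∑ q ∈ S ×ˢ S, p ^ #(q.1 ∪ q.2)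
      ≤ ∑ q ∈ S ×ˢ S, (p ^ (2 * k - 1)
          + (if q.1 ≠ q.2 ∧ 2 ≤ #(q.1 ∩ q.2) then p ^ (k + 1) else 0)
          + (if q.1 = q.2 then p ^ k else 0)) := by
        refine sum_le_sum fun q hq => ?_
        obtain ⟨h1, h2⟩ := mem_product.1 hq
        exact pow_card_union_le_of_not_disjoint hp0 hp1 (hS _ h1) (hS _ h2) (hSi h1 h2)
    _ = _ := by
        rw [sum_add_distrib, sum_add_distrib, ← sum_filter, ← sum_filter, ← diag_eq_filter]
        simp only [sum_const, card_product, diag_card, nsmul_eq_mul]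
        push_cast
        ring

end Combinatorics

section Percolation

variable {ι : Type*} [Fintype ι] (μ : Measure Bool) [IsProbabilityMeasure μ]

lemma measureReal_pi_finset_pi_true (s : Finset ι) :
    (Measure.pi fun _ : ι => μ).real ((s : Set ι).pi fun _ => {true}) = μ.real {true} ^ #s := by
  simp [measureReal_def, Measure.pi_pi_finset, ENNReal.toReal_pow]

lemma card_filter_forall_true_sq [DecidableEq ι] (S : Finset (Finset ι)) (ω : ι → Bool) :
    (#{e ∈ S | ∀ u ∈ e, ω u = true} : ℝ) ^ 2
      = ∑ q ∈ S ×ˢ S, ((↑(q.1 ∪ q.2) : Set ι).pi fun _ => {true}).indicator 1 ω := by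
  have hcard : (#{e ∈ S | ∀ u ∈ e, ω u = true} : ℝ)
      = ∑ e ∈ S, ((e : Set ι).pi fun _ => {true}).indicator 1 ω := by
    rw [natCast_card_filter]
    refine sum_congr rfl fun e _ => ?_
    classical
    simp only [Set.indicator_apply, Set.mem_pi, mem_coe, Set.mem_singleton_iff, Pi.one_apply]
  rw [hcard, sq, sum_mul_sum, ← sum_product']
  simp only [coe_union, Set.union_pi, Set.inter_indicator_one, Pi.mul_apply]

lemma integral_sq_card_filter_forall_true [DecidableEq ι] (S : Finset (Finset ι)) :
    ∫ ω, (#{e ∈ S | ∀ u ∈ e, ω u = true} : ℝ) ^ 2 ∂(Measure.pi fun _ : ι => μ)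
      = ∑ q ∈ S ×ˢ S, μ.real {true} ^ #(q.1 ∪ q.2) := by
  have hmeas (s : Finset ι) : MeasurableSet ((s : Set ι).pi fun _ => ({true} : Set Bool)) :=
    .pi s.countable_toSet fun _ _ => measurableSet_singleton true
  simp_rw [card_filter_forall_true_sq]
  rw [integral_finsetSum _ fun q _ => (integrable_const 1).indicator (hmeas _)]
  simp_rw [integral_indicator_one (hmeas _), measureReal_pi_finset_pi_true]

end Percolation

/-- With `D` the number of edges through `v` entirely contained in the
`ε`-percolation of `V` (including `v` itself being sampled), and the overlapping-pairs
hypothesis, `E[D²] ≤ (ε^(2k-1) + ε^(k+1) η) d² + ε^k d`. -/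
theorem second_moment_degree_after_percolation {V : Type*} [Fintype V] [DecidableEq V]
    (k : ℕ) (E : Finset (Finset V)) (hE : ∀ e ∈ E, e.card = k)
    (v : V) (d : ℕ) (hd : d = (E.filter (fun e => v ∈ e)).card)
    (η : ℝ)
    (hpairs : ((((E ×ˢ E).filter (fun q =>
        q.1 ≠ q.2 ∧ v ∈ q.1 ∧ v ∈ q.2 ∧ 2 ≤ (q.1 ∩ q.2).card)).card : ℝ) ≤ η * d ^ 2))
    (ε : NNReal) (hε1 : ε < 1) :
    ∫ ω : V → Bool,
        (((E.filter (fun e => v ∈ e ∧ ∀ u ∈ e, ω u = true)).card : ℝ)) ^ 2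
        ∂(Measure.pi fun _ : V => (PMF.bernoulli ε (by exact_mod_cast hε1.le)).toMeasure)
      ≤ ((ε : ℝ) ^ (2 * k - 1) + (ε : ℝ) ^ (k + 1) * η) * d ^ 2 + (ε : ℝ) ^ k * d := by
  set S := E.filter (fun e => v ∈ e)
  have hp : (PMF.bernoulli ε (by exact_mod_cast hε1.le)).toMeasure.real {true} = ε := by
    simp [measureReal_def, PMF.bernoulli_apply]
  have hSi : (S : Set (Finset V)).Intersecting := fun e he f hf =>
    not_disjoint_iff.2 ⟨v, (mem_filter.1 he).2, (mem_filter.1 hf).2⟩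
  have hoverlap : {q ∈ S ×ˢ S | q.1 ≠ q.2 ∧ 2 ≤ #(q.1 ∩ q.2)}
      = {q ∈ E ×ˢ E | q.1 ≠ q.2 ∧ v ∈ q.1 ∧ v ∈ q.2 ∧ 2 ≤ #(q.1 ∩ q.2)} := by
    ext q; simp only [S, mem_filter, mem_product]; tauto
  simp_rw [← filter_filter, integral_sq_card_filter_forall_true, hp]
  calc _ ≤ (ε : ℝ) ^ (2 * k - 1) * #S ^ 2
        + (ε : ℝ) ^ (k + 1) * #{q ∈ S ×ˢ S | q.1 ≠ q.2 ∧ 2 ≤ #(q.1 ∩ q.2)} + (ε : ℝ) ^ k * #S :=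
        sum_pow_card_union_le_of_intersecting ε.2 (by exact_mod_cast hε1.le)
          (fun e he => hE e (mem_filter.1 he).1) hSi
    _ ≤ (ε : ℝ) ^ (2 * k - 1) * d ^ 2 + (ε : ℝ) ^ (k + 1) * (η * d ^ 2) + (ε : ℝ) ^ k * d := by
        rw [hoverlap, ← hd]; gcongr
    _ = _ := by ring
end

section
/- Let H = (V,E) be a k-uniform hypergraph and W ⊆ V. For a vertex v ∈ W, consider the function Y(W) = ∑_{u∈V} deg_W(u)², where deg_W(u) is the degree of u in the subhypergraph induced by W. Then changing whether v belongs to W changes Y by at most deg_{W∪{v}}(v)² + 4 ∑_u codeg_{W∪{v}}(u,v) · deg_{W∪{v}}(u), where the sum ranges over vertices u ≠ v lying in a common edge with v, and codeg denotes co-degree. -/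
/-!
The edges inside `W ∪ {v}` that contain `u` are those avoiding `v`, i.e. the edges inside
`W \ {v}`, together with those through `v`; so `deg₊(u) = deg₋(u) + codeg₊(u, v)`, where `₊`
and `₋` refer to `W ∪ {v}` and `W \ {v}`, and `deg₋(v) = 0`. Since `(b + c)² - b² ≤ 2c(b + c)`,
each `u ≠ v` changes `Y` by at most `2 codeg₊(u, v) deg₊(u)`, and `u = v` by `deg₊(v)²`.
-/

open Finset

lemma card_filter_subset_insert_eq_add {V : Type*} [DecidableEq V] (E : Finset (Finset V))
    (p : Finset V → Prop) [DecidablePred p] (W : Finset V) (v : V) :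
    #{e ∈ E | p e ∧ e ⊆ insert v W}
      = #{e ∈ E | p e ∧ e ⊆ W.erase v} + #{e ∈ E | p e ∧ v ∈ e ∧ e ⊆ insert v W} := by
  rw [← card_filter_add_card_filter_not (p := fun e => v ∉ e), filter_filter, filter_filter]
  congr 2 <;> refine filter_congr fun e _ => ?_
  · rw [subset_erase]
    constructor
    · rintro ⟨⟨hp, hsub⟩, hve⟩
      exact ⟨hp, (subset_insert_iff_of_notMem hve).1 hsub, hve⟩
    · rintro ⟨hp, hsub, hve⟩
      exact ⟨⟨hp, (subset_insert_iff_of_notMem hve).2 hsub⟩, hve⟩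
  · tauto

lemma sq_sub_sq_le_two_mul {R : Type*} [CommRing R] [LinearOrder R] [IsStrictOrderedRing R]
    (b c : R) : (b + c) ^ 2 - b ^ 2 ≤ 2 * (c * (b + c)) := by
  nlinarith [sq_nonneg c]

lemma abs_sum_sq_sub_sum_sq_le {ι R : Type*} [DecidableEq ι] [CommRing R] [LinearOrder R]
    [IsStrictOrderedRing R] {s : Finset ι} {i : ι} (hi : i ∈ s) {a b c : ι → R}
    (hb : ∀ j ∈ s, 0 ≤ b j) (hc : ∀ j ∈ s, 0 ≤ c j) (habc : ∀ j ∈ s, a j = b j + c j)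
    (hbi : b i = 0) :
    |∑ j ∈ s, a j ^ 2 - ∑ j ∈ s, b j ^ 2| ≤ a i ^ 2 + 4 * ∑ j ∈ s.erase i, c j * a j := by
  have hterm : ∀ j ∈ s, a j ^ 2 - b j ^ 2 ≤ 2 * (c j * a j) := fun j hj => by
    simpa only [habc j hj] using sq_sub_sq_le_two_mul (b j) (c j)
  have hmono : ∀ j ∈ s, b j ^ 2 ≤ a j ^ 2 := fun j hj => by
    rw [habc j hj]
    exact pow_le_pow_left₀ (hb j hj) (le_add_of_nonneg_right (hc j hj)) 2
  have hsum_nonneg : 0 ≤ ∑ j ∈ s.erase i, c j * a j := sum_nonneg fun j hj => by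
    have hj := mem_of_mem_erase hj
    exact mul_nonneg (hc j hj) (habc j hj ▸ add_nonneg (hb j hj) (hc j hj))
  rw [abs_of_nonneg (sub_nonneg.2 (sum_le_sum hmono)), ← sum_sub_distrib,
    ← add_sum_erase _ _ hi, hbi]
  calc a i ^ 2 - 0 ^ 2 + ∑ j ∈ s.erase i, (a j ^ 2 - b j ^ 2)
      ≤ a i ^ 2 + 2 * ∑ j ∈ s.erase i, c j * a j := by
        rw [mul_sum]
        gcongr with j hj
        · simp
        · exact hterm j (mem_of_mem_erase hj)
    _ ≤ a i ^ 2 + 4 * ∑ j ∈ s.erase i, c j * a j := by linarith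

theorem sum_sq_degrees_lipschitz_general {V : Type*} [Fintype V] [DecidableEq V]
    (E : Finset (Finset V))
    (W : Finset V) (v : V) :
    |(∑ u : V, ((E.filter (fun e => u ∈ e ∧ e ⊆ insert v W)).card : ℤ) ^ 2)
      - ∑ u : V, ((E.filter (fun e => u ∈ e ∧ e ⊆ W.erase v)).card : ℤ) ^ 2|
      ≤ ((E.filter (fun e => v ∈ e ∧ e ⊆ insert v W)).card : ℤ) ^ 2
        + 4 * ∑ u ∈ Finset.univ.erase v,
            ((E.filter (fun e => u ∈ e ∧ v ∈ e ∧ e ⊆ insert v W)).card : ℤ)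
              * (E.filter (fun e => u ∈ e ∧ e ⊆ insert v W)).card := by
  have hsplit : ∀ u ∈ (univ : Finset V),
      (#{e ∈ E | u ∈ e ∧ e ⊆ insert v W} : ℤ)
        = #{e ∈ E | u ∈ e ∧ e ⊆ W.erase v} + #{e ∈ E | u ∈ e ∧ v ∈ e ∧ e ⊆ insert v W} :=
    fun u _ => mod_cast card_filter_subset_insert_eq_add E (u ∈ ·) W v
  have hv : (#{e ∈ E | v ∈ e ∧ e ⊆ W.erase v} : ℤ) = 0 := by
    simp only [Nat.cast_eq_zero, card_eq_zero, filter_eq_empty_iff, not_and]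
    exact fun e _ hve hsub => notMem_erase v W (hsub hve)
  exact abs_sum_sq_sub_sum_sq_le (mem_univ v) (fun _ _ => Int.natCast_nonneg _)
    (fun _ _ => Int.natCast_nonneg _) hsplit hv

/-- Lipschitz bound for `Y(W) = ∑_u deg_W(u)²`: toggling the membership of a
vertex `v` changes `Y` by at most
`deg_{W∪{v}}(v)² + 4 ∑_{u ≠ v} codeg_{W∪{v}}(u,v) · deg_{W∪{v}}(u)`. -/
theorem sum_sq_degrees_lipschitz {V : Type*} [Fintype V] [DecidableEq V]
    (k : ℕ) (E : Finset (Finset V)) (hE : ∀ e ∈ E, e.card = k)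
    (W : Finset V) (v : V) (hv : v ∈ W) :
    |(∑ u : V, ((E.filter (fun e => u ∈ e ∧ e ⊆ insert v W)).card : ℤ) ^ 2)
      - ∑ u : V, ((E.filter (fun e => u ∈ e ∧ e ⊆ W.erase v)).card : ℤ) ^ 2|
      ≤ ((E.filter (fun e => v ∈ e ∧ e ⊆ insert v W)).card : ℤ) ^ 2
        + 4 * ∑ u ∈ Finset.univ.erase v,
            ((E.filter (fun e => u ∈ e ∧ v ∈ e ∧ e ⊆ insert v W)).card : ℤ)
              * (E.filter (fun e => u ∈ e ∧ e ⊆ insert v W)).card :=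
  sum_sq_degrees_lipschitz_general E W v
end

section
/- Let G = K_r with r ≥ 4 and let R_2 = {x_1, x_2, x_3} be three vertices of G designated as roots (with x_1 x_2 an edge). Then the rooted graph (R_2, G) is balanced in the sense that every induced subgraph F' of G containing R_2 with at least 4 vertices has rooted density at most the rooted density of (R_2, G). -/
lemma two_mul_choose_two (n : ℕ) : 2 * n.choose 2 = n * (n - 1) := by
  induction n with
  | zero => rfl
  | succ n ih =>
    rw [Nat.choose_succ_succ, Nat.choose_one_right]
    simp only [Nat.succ_sub_one]
    cases n with
    | zero => rfl
    | succ m =>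
      simp only [Nat.succ_sub_one] at ih
      ring_nf
      ring_nf at ih
      omega

lemma choose_two_cast (n : ℕ) (hn : 4 ≤ n) :
    ((n.choose 2 - 3 : ℕ) : ℝ) = (n : ℝ) * ((n : ℝ) - 1) / 2 - 3 := by
  have h := two_mul_choose_two n
  have h3 : 3 ≤ n.choose 2 := by
    have h12 : 4 * 3 ≤ n * (n - 1) := Nat.mul_le_mul hn (by omega)
    omega
  have hc : ((n.choose 2 : ℕ) : ℝ) = (n : ℝ) * ((n : ℝ) - 1) / 2 := by
    have := congrArg (fun k : ℕ => (k : ℝ)) h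
    push_cast [Nat.cast_sub (by omega : 1 ≤ n)] at this
    linarith
  rw [Nat.cast_sub h3, hc]
  norm_num

/-- The rooted graph `(R₂, K_r)` with three roots (`r ≥ 4`) is balanced:
every induced subgraph on a set `S` containing the three roots with `|S| ≥ 4` (a complete
graph `K_{|S|}`, with `C(|S|,2) - 3` edges not induced by the roots and `|S| - 3` non-root
vertices) has rooted density at most that of `(R₂, K_r)`. -/
theorem rooted_complete_graph_three_roots_balanced (r : ℕ) (hr : 4 ≤ r)
    (x₁ x₂ x₃ : Fin r) (hx12 : x₁ ≠ x₂) (hx13 : x₁ ≠ x₃) (hx23 : x₂ ≠ x₃)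
    (S : Finset (Fin r)) (h1 : x₁ ∈ S) (h2 : x₂ ∈ S) (h3 : x₃ ∈ S) (h4 : 4 ≤ S.card) :
    ((S.card.choose 2 - 3 : ℕ) : ℝ) / ((S.card - 3 : ℕ) : ℝ)
      ≤ ((r.choose 2 - 3 : ℕ) : ℝ) / ((r - 3 : ℕ) : ℝ) := by
  set s := S.card with hs
  have hsr : s ≤ r := by
    simpa using S.card_le_univ.trans_eq (by simp)
  rw [choose_two_cast s h4, choose_two_cast r hr,
    Nat.cast_sub (by omega : 3 ≤ s), Nat.cast_sub (by omega : 3 ≤ r)]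
  have hs4 : (4 : ℝ) ≤ (s : ℝ) := by exact_mod_cast h4
  have hsr' : (s : ℝ) ≤ (r : ℝ) := by exact_mod_cast hsr
  rw [div_le_div_iff₀ (by push_cast; linarith) (by push_cast; linarith)]
  push_cast
  nlinarith [mul_le_mul_of_nonneg_left hsr' (by linarith : (0:ℝ) ≤ (s:ℝ) - 3)]
end
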